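/- arXiv:2402.17552 — 4 statements merged into one kernel-verified Lean document; each statement's English description precedes it below -/
import Mathlib

section
/- Let A ∈ L(K,H), let W ∈ L(H) be Krein-selfadjoint, and let x ∈ H. Then a vector u ∈ K is a W-ILSS of the equation Az = x if and only if ran A is W-nonnegative and A^# W (Au − x) = 0. -/
open ContinuousLinearMap

noncomputable section

variable {H K : Type*} [NormedAddCommGroup H] [InnerProductSpace ℂ H] [CompleteSpace H]
  [NormedAddCommGroup K] [InnerProductSpace ℂ K] [CompleteSpace K]

/-- The Krein adjoint `A^# = J_K ∘ A* ∘ J_H` of an operator `A : K →L[ℂ] H` between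
Krein spaces with signature operators `JK` and `JH`. -/
def kreinAdjoint (JK : K →L[ℂ] K) (JH : H →L[ℂ] H) (A : K →L[ℂ] H) : H →L[ℂ] K :=
  JK ∘L (ContinuousLinearMap.adjoint A) ∘L JH

/-- `u` is an indefinite weighted least squares solution (W-ILSS) of `A z = x`:
`[W(Au−x),Au−x] ≤ [W(Az−x),Az−x]` for all `z`, where `[x,y] = ⟨J_H x, y⟩`. -/
def IsWILSS (JH : H →L[ℂ] H) (A : K →L[ℂ] H) (W : H →L[ℂ] H) (x : H) (u : K) : Prop :=
  ∀ z : K,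
    (inner ℂ (JH (W (A u - x))) (A u - x) : ℂ).re ≤
      (inner ℂ (JH (W (A z - x))) (A z - x) : ℂ).re

/-! For `B = J_H W`, which is selfadjoint in the Hilbert sense, `u` is a W-ILSS iff the residual
`e = Au - x` minimises the real quadratic form `Q v = re ⟪B v, v⟫` on `e + ran A`. Along a real
line, `Q (e + t v) - Q e = 2 t re ⟪B e, v⟫ + t² Q v`, which is nonnegative for all `t` iff
`re ⟪B e, v⟫ = 0` and `Q v ≥ 0`; applying this to `v` and `i v` gives `B e ⊥ ran A`, that is
`A* B e = 0`, and `J_K` is injective. -/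

lemma eq_zero_and_nonneg_of_forall_quadratic_nonneg {a b : ℝ}
    (h : ∀ t : ℝ, 0 ≤ b * (t * t) + 2 * a * t) : a = 0 ∧ 0 ≤ b := by
  have hdiscr : discrim b (2 * a) 0 ≤ 0 := discrim_le_zero fun t => by simpa using h t
  have ha : a = 0 := by
    rw [discrim] at hdiscr
    nlinarith [sq_nonneg a]
  refine ⟨ha, ?_⟩
  simpa [ha] using h 1

section QuadraticForm

variable {E : Type*} [NormedAddCommGroup E] [InnerProductSpace ℂ E] {B : E →L[ℂ] E}

lemma reApplyInnerSelf_add (hB : (B : E →ₗ[ℂ] E).IsSymmetric) (e v : E) :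
    B.reApplyInnerSelf (e + v) =
      B.reApplyInnerSelf e + 2 * (inner ℂ (B e) v).re + B.reApplyInnerSelf v := by
  have hsymm : (inner ℂ (B v) e).re = (inner ℂ (B e) v).re := by
    rw [← inner_conj_symm, Complex.conj_re]
    exact congrArg Complex.re (hB e v).symm
  simp only [reApplyInnerSelf_apply, RCLike.re_to_complex, map_add, inner_add_left,
    inner_add_right, hsymm]
  ring

lemma forall_reApplyInnerSelf_le_add_iff (hB : (B : E →ₗ[ℂ] E).IsSymmetric)
    (V : Submodule ℂ E) (e : E) :
    (∀ v ∈ V, B.reApplyInnerSelf e ≤ B.reApplyInnerSelf (e + v)) ↔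
      (∀ v ∈ V, 0 ≤ B.reApplyInnerSelf v) ∧ B e ∈ Vᗮ := by
  constructor
  · intro h
    have hline : ∀ v ∈ V, (inner ℂ (B e) v).re = 0 ∧ 0 ≤ B.reApplyInnerSelf v := fun v hv =>
      eq_zero_and_nonneg_of_forall_quadratic_nonneg fun t => by
        have := h ((t : ℂ) • v) (V.smul_mem _ hv)
        rw [reApplyInnerSelf_add hB, reApplyInnerSelf_smul, inner_smul_right,
          Complex.re_ofReal_mul, Complex.norm_real, Real.norm_eq_abs, sq_abs] at this
        linarith
    refine ⟨fun v hv => (hline v hv).2, (Submodule.mem_orthogonal' _ _).2 fun v hv => ?_⟩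
    have him : (inner ℂ (B e) v).im = 0 := by
      simpa [inner_smul_right] using (hline _ (V.smul_mem Complex.I hv)).1
    exact Complex.ext (hline v hv).1 him
  · rintro ⟨hnonneg, horth⟩ v hv
    rw [reApplyInnerSelf_add hB, (Submodule.mem_orthogonal' _ _).1 horth v hv, Complex.zero_re]
    linarith [hnonneg v hv]

end QuadraticForm

lemma isSelfAdjoint_comp_of_kreinSelfAdjoint {JH W : H →L[ℂ] H} (hJHsa : IsSelfAdjoint JH)
    (hJH2 : JH ∘L JH = 1) (hW : JH ∘L (ContinuousLinearMap.adjoint W) ∘L JH = W) :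
    IsSelfAdjoint (JH ∘L W) := by
  rw [isSelfAdjoint_iff', adjoint_comp, hJHsa.adjoint_eq]
  calc adjoint W ∘L JH = (JH ∘L JH) ∘L adjoint W ∘L JH := by rw [hJH2, one_def, id_comp]
    _ = JH ∘L W := by rw [comp_assoc, hW]

lemma kreinAdjoint_apply_eq_zero_iff {JK : K →L[ℂ] K} (hJK2 : JK ∘L JK = 1) (JH : H →L[ℂ] H)
    (A : K →L[ℂ] H) (y : H) :
    kreinAdjoint JK JH A y = 0 ↔ ContinuousLinearMap.adjoint A (JH y) = 0 := by
  have hJK : Function.Injective JK :=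
    Function.LeftInverse.injective fun v => by simpa using congr($hJK2 v)
  simp [kreinAdjoint, map_eq_zero_iff JK hJK]

theorem stmt0_general
    (JH : H →L[ℂ] H) (hJHsa : IsSelfAdjoint JH) (hJH2 : JH ∘L JH = 1)
    (JK : K →L[ℂ] K) (hJK2 : JK ∘L JK = 1)
    (A : K →L[ℂ] H) (W : H →L[ℂ] H)
    (hW : JH ∘L (ContinuousLinearMap.adjoint W) ∘L JH = W)
    (x : H) (u : K) :
    IsWILSS JH A W x u ↔
      ((∀ z : K, 0 ≤ (inner ℂ (JH (W (A z))) (A z) : ℂ).re) ∧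
        kreinAdjoint JK JH A (W (A u - x)) = 0) := by
  have hB := (isSelfAdjoint_comp_of_kreinSelfAdjoint hJHsa hJH2 hW).isSymmetric
  have hminimal := forall_reApplyInnerSelf_le_add_iff hB A.range (A u - x)
  have hresidual : ∀ z, A u - x + A (z - u) = A z - x := fun z => by
    rw [map_sub]; abel
  have hWILSS : IsWILSS JH A W x u ↔
      ∀ z, (JH ∘L W).reApplyInnerSelf (A u - x) ≤ (JH ∘L W).reApplyInnerSelf (A u - x + A z) :=
    ⟨fun h z => by
      have := h (u + z)
      rwa [map_add, add_sub_right_comm] at this, fun h z => hresidual z ▸ h (z - u)⟩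
  rw [orthogonal_range, LinearMap.mem_ker, coe_coe] at hminimal
  simp only [LinearMap.mem_range, forall_exists_index, forall_apply_eq_imp_iff, coe_coe] at hminimal
  rw [kreinAdjoint_apply_eq_zero_iff hJK2, hWILSS, hminimal]
  rfl

/-- `u` is a W-ILSS of `Az = x` iff `ran A` is `W`-nonnegative and
`A^# W (Au − x) = 0`. -/
theorem stmt0
    [TopologicalSpace.SeparableSpace H] [TopologicalSpace.SeparableSpace K]
    (JH : H →L[ℂ] H) (hJHsa : IsSelfAdjoint JH) (hJH2 : JH ∘L JH = 1)
    (JK : K →L[ℂ] K) (hJKsa : IsSelfAdjoint JK) (hJK2 : JK ∘L JK = 1)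
    (A : K →L[ℂ] H) (W : H →L[ℂ] H)
    (hW : JH ∘L (ContinuousLinearMap.adjoint W) ∘L JH = W)
    (x : H) (u : K) :
    IsWILSS JH A W x u ↔
      ((∀ z : K, 0 ≤ (inner ℂ (JH (W (A z))) (A z) : ℂ).re) ∧
        kreinAdjoint JK JH A (W (A u - x)) = 0) :=
  stmt0_general JH hJHsa hJH2 JK hJK2 A W hW x u
end
end

section
/- Let A ∈ L(K,H) and let W ∈ L(H) be Krein-selfadjoint. If A admits an indefinite W-inverse, then H = cl(ran A) + ker(A^# W), where cl(ran A) is the closure of ran A; that is, W is cl(ran A)-complementable (note ker(A^# W) = {h ∈ H : [h, Ws] = 0 for all s ∈ cl(ran A)}, the orthogonal companion of W(cl(ran A))). -/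
open ContinuousLinearMap

noncomputable section

variable {H K : Type*} [NormedAddCommGroup H] [InnerProductSpace ℂ H] [CompleteSpace H]
  [NormedAddCommGroup K] [InnerProductSpace ℂ K] [CompleteSpace K]

/-! The residual `v = A (G x) - x` minimises `y ↦ re [W y, y]` on the coset `v + ran A`.
Because `J_H W` is selfadjoint (`W` is Krein-selfadjoint and `J_H² = 1`), the first variation of
this form at `v` in the direction `c • A z` is `2 re (c ⟪J_H W v, A z⟫)`, so minimality forces
`⟪J_H W v, A z⟫ = 0` for all `z`, i.e. `A^* J_H W v = 0`. Hence `x = A (G x) + (-v)` with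
`-v ∈ ker (A^# W)`. -/

open RCLike
open scoped InnerProductSpace ComplexConjugate

section SymmetricForm

variable {𝕜 E : Type*} [RCLike 𝕜] [NormedAddCommGroup E] [InnerProductSpace 𝕜 E]

theorem LinearMap.IsSymmetric.inner_map_add_smul {T : E →ₗ[𝕜] E} (hT : T.IsSymmetric)
    (v w : E) (c : 𝕜) :
    ⟪T (v + c • w), v + c • w⟫_𝕜 =
      ⟪T v, v⟫_𝕜 + c * ⟪T v, w⟫_𝕜 + conj (c * ⟪T v, w⟫_𝕜) + (‖c‖ ^ 2 : ℝ) * ⟪T w, w⟫_𝕜 := by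
  rw [map_add, map_smul, inner_add_left, inner_add_right, inner_add_right, inner_smul_left,
    inner_smul_left, inner_smul_right, inner_smul_right, hT w v, ← inner_conj_symm w (T v),
    map_mul, ofReal_pow, ← RCLike.conj_mul]
  ring

theorem LinearMap.IsSymmetric.inner_map_eq_zero_of_forall_re_inner_le {T : E →ₗ[𝕜] E}
    (hT : T.IsSymmetric) {v w : E}
    (hmin : ∀ c : 𝕜, re ⟪T v, v⟫_𝕜 ≤ re ⟪T (v + c • w), v + c • w⟫_𝕜) :
    ⟪T v, w⟫_𝕜 = 0 := by
  set α := ⟪T v, w⟫_𝕜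
  -- along `c = t * conj α` the increment is the real quadratic `‖α‖² (2 t + t² re ⟪T w, w⟫)`
  have hquad : ∀ t : ℝ, 0 ≤ (‖α‖ ^ 2 * re ⟪T w, w⟫_𝕜) * (t * t) + 2 * ‖α‖ ^ 2 * t + 0 := by
    intro t
    have := hmin (t * conj α)
    rw [hT.inner_map_add_smul, mul_assoc, RCLike.conj_mul, ← ofReal_pow, ← ofReal_mul, norm_mul,
      norm_conj, norm_ofReal] at this
    simp only [map_add, conj_ofReal, ofReal_re, re_ofReal_mul, mul_pow, sq_abs] at this
    linarith
  have hdisc := discrim_le_zero hquad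
  rw [discrim, mul_zero, sub_zero] at hdisc
  by_contra hα
  have : 0 < (2 * ‖α‖ ^ 2) ^ 2 := by positivity
  linarith

end SymmetricForm

theorem isSelfAdjoint_comp_of_kreinSelfAdjoint_s3 {𝕜 E : Type*} [RCLike 𝕜] [NormedAddCommGroup E]
    [InnerProductSpace 𝕜 E] [CompleteSpace E] {J W : E →L[𝕜] E} (hJ : IsSelfAdjoint J)
    (hJ2 : J ∘L J = 1) (hW : J ∘L adjoint W ∘L J = W) : IsSelfAdjoint (J ∘L W) := by
  rw [← mul_def, ← mul_def, ← star_eq_adjoint] at hW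
  rw [← mul_def] at hJ2
  have hJW : J * W = star W * J :=
    calc J * W = J * (J * (star W * J)) := by rw [hW]
      _ = star W * J := by rw [← mul_assoc, hJ2, one_mul]
  rw [← mul_def, IsSelfAdjoint, star_mul, hJ.star_eq, hJW]

theorem IsWILSS.kreinAdjoint_apply_eq_zero {JH : H →L[ℂ] H} {A : K →L[ℂ] H} {W : H →L[ℂ] H}
    {x : H} {u : K} (hJW : IsSelfAdjoint (JH ∘L W)) (hu : IsWILSS JH A W x u)
    (JK : K →L[ℂ] K) : kreinAdjoint JK JH A (W (A u - x)) = 0 := by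
  have horth : adjoint A (JH (W (A u - x))) = 0 := by
    refine ext_inner_right ℂ fun z => ?_
    rw [adjoint_inner_left, inner_zero_left]
    refine hJW.isSymmetric.inner_map_eq_zero_of_forall_re_inner_le fun c => ?_
    have := hu (u + c • z)
    rwa [map_add, map_smul, add_sub_right_comm] at this
  rw [kreinAdjoint, comp_apply, comp_apply, horth, map_zero]

theorem stmt3_general
    (JH : H →L[ℂ] H) (hJHsa : IsSelfAdjoint JH) (hJH2 : JH ∘L JH = 1)
    (JK : K →L[ℂ] K)
    (A : K →L[ℂ] H) (W : H →L[ℂ] H)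
    (hW : JH ∘L (ContinuousLinearMap.adjoint W) ∘L JH = W)
    (hG : ∃ G : H →L[ℂ] K, ∀ x : H, IsWILSS JH A W x (G x)) :
    ∀ x : H, ∃ m ∈ closure (Set.range A), ∃ h : H,
      kreinAdjoint JK JH A (W h) = 0 ∧ x = m + h := by
  obtain ⟨G, hG⟩ := hG
  have hJW := isSelfAdjoint_comp_of_kreinSelfAdjoint_s3 hJHsa hJH2 hW
  intro x
  refine ⟨A (G x), subset_closure ⟨G x, rfl⟩, -(A (G x) - x), ?_, by abel⟩
  rw [map_neg, map_neg, (hG x).kreinAdjoint_apply_eq_zero hJW, neg_zero]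

/-- if `A` admits an indefinite `W`-inverse, then
`H = cl(ran A) + ker(A^# W)`, i.e. `W` is `cl(ran A)`-complementable. -/
theorem stmt3
    [TopologicalSpace.SeparableSpace H] [TopologicalSpace.SeparableSpace K]
    (JH : H →L[ℂ] H) (hJHsa : IsSelfAdjoint JH) (hJH2 : JH ∘L JH = 1)
    (JK : K →L[ℂ] K) (hJKsa : IsSelfAdjoint JK) (hJK2 : JK ∘L JK = 1)
    (A : K →L[ℂ] H) (W : H →L[ℂ] H)
    (hW : JH ∘L (ContinuousLinearMap.adjoint W) ∘L JH = W)
    (hG : ∃ G : H →L[ℂ] K, ∀ x : H, IsWILSS JH A W x (G x)) :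
    ∀ x : H, ∃ m ∈ closure (Set.range A), ∃ h : H,
      kreinAdjoint JK JH A (W h) = 0 ∧ x = m + h :=
  stmt3_general JH hJHsa hJH2 JK A W hW hG
end
end

section
/- Let A ∈ L(K,H) and let W ∈ L(H) be Krein-selfadjoint. The following are equivalent: (a) there exists X₀ ∈ L(H,K) such that (AX−I)^# W (AX−I) − (AX₀−I)^# W (AX₀−I) is Krein-positive for every X ∈ L(H,K); (b) ran A is W-nonnegative and ran A + ker(A^# W) = H. -/
open ContinuousLinearMap

noncomputable section

variable {H K : Type*} [NormedAddCommGroup H] [InnerProductSpace ℂ H] [CompleteSpace H]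
  [NormedAddCommGroup K] [InnerProductSpace ℂ K] [CompleteSpace K]

/-- An operator `S ∈ L(H)` is Krein-positive: `S^# = S` and `[Sx,x] ≥ 0` for all `x`. -/
def KreinPositive (JH : H →L[ℂ] H) (S : H →L[ℂ] H) : Prop :=
  kreinAdjoint JH JH S = S ∧ ∀ x : H, 0 ≤ (inner ℂ (JH (S x)) x : ℂ).re

/-- The error operator `(AX − I)^# W (AX − I)`. -/
def errOp (JH : H →L[ℂ] H) (A : K →L[ℂ] H) (W : H →L[ℂ] H) (X : H →L[ℂ] K) :
    H →L[ℂ] H :=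
  kreinAdjoint JH JH (A ∘L X - 1) ∘L (W ∘L (A ∘L X - 1))

/-! At `X = X₀ + D` the Krein form of the increment of the error operator is
`2 Re [W (A X₀ x - x), A D x] + [W A D x, A D x]`. If `ran A` is `W`-nonnegative and `X₀` solves
the normal equation `A^# W (A X₀ - I) = 0`, the cross term vanishes and the increment is
Krein-positive; a bounded solution exists when `ran A + ker (A^# W) = H`, since then `A` composed
with the orthogonal projection onto `ker (A^# W)ᗮ` is onto and has a bounded right inverse.
Conversely, at a minimiser the rank-one perturbations `D x = c • k` make the real quadratic
`c ↦ 2 Re (c α) + |c|² q` nonnegative on `ℂ`, where `α = [W (A X₀ x - x), A k]` and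
`q = [W A k, A k]`; this forces `α = 0` (the normal equation, giving the decomposition
`x = A X₀ x + (x - A X₀ x)`) and `q ≥ 0`. -/

open scoped InnerProductSpace ComplexConjugate

namespace ContinuousLinearMap.HasRightInverse

theorem of_surjective_of_innerProductSpace {𝕜 E F : Type*} [RCLike 𝕜]
    [NormedAddCommGroup E] [InnerProductSpace 𝕜 E] [CompleteSpace E]
    [NormedAddCommGroup F] [NormedSpace 𝕜 F] [CompleteSpace F]
    {B : E →L[𝕜] F} (hB : Function.Surjective B) : B.HasRightInverse := by
  have : CompleteSpace B.ker := B.isClosed_ker.completeSpace_coe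
  have hP : Function.Surjective B.ker.orthogonalProjectionOnto := fun v =>
    ⟨v, Submodule.orthogonalProjectionOnto_mem_subspace_eq_self v⟩
  let e := equivProdOfSurjectiveOfIsCompl B B.ker.orthogonalProjectionOnto
    (LinearMap.range_eq_top.2 hB) (LinearMap.range_eq_top.2 hP)
    (by rw [Submodule.ker_orthogonalProjectionOnto]; exact B.ker.isCompl_orthogonal)
  exact ⟨(e.symm : F × B.ker →L[𝕜] E) ∘L inl 𝕜 F B.ker, fun y =>
    congrArg Prod.fst (e.apply_symm_apply (y, 0))⟩

end ContinuousLinearMap.HasRightInverse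

theorem exists_apply_sub_mem_of_range_sup_eq_top {𝕜 E F : Type*} [RCLike 𝕜]
    [NormedAddCommGroup E] [InnerProductSpace 𝕜 E] [CompleteSpace E]
    [NormedAddCommGroup F] [InnerProductSpace 𝕜 F] [CompleteSpace F]
    (A : E →L[𝕜] F) {N : Submodule 𝕜 F} (hN : IsClosed (N : Set F))
    (h : A.range ⊔ N = ⊤) : ∃ X : F →L[𝕜] E, ∀ x, A (X x) - x ∈ N := by
  have : CompleteSpace N := hN.completeSpace_coe
  set P := Nᗮ.orthogonalProjectionOnto
  have hPA : Function.Surjective (P ∘L A) := by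
    intro y
    obtain ⟨_, ⟨z, rfl⟩, n, hn, hy⟩ := Submodule.mem_sup.1 (h ▸ Submodule.mem_top (x := (y : F)))
    have hPn : P n = 0 :=
      Submodule.orthogonalProjectionOnto_eq_zero_iff.2 (N.le_orthogonal_orthogonal hn)
    refine ⟨z, ?_⟩
    have hPy := congrArg P hy
    rwa [map_add, hPn, add_zero, Submodule.orthogonalProjectionOnto_mem_subspace_eq_self] at hPy
  obtain ⟨R, hR⟩ := HasRightInverse.of_surjective_of_innerProductSpace hPA
  refine ⟨R ∘L P, fun x => ?_⟩
  have hP0 : P (A (R (P x)) - x) = 0 := by rw [map_sub, ← comp_apply P A, hR, sub_self]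
  rwa [Submodule.orthogonalProjectionOnto_eq_zero_iff, N.orthogonal_orthogonal] at hP0

theorem eq_zero_and_nonneg_of_forall_re_quadratic_nonneg {α : ℂ} {q : ℝ}
    (h : ∀ c : ℂ, 0 ≤ 2 * (c * α).re + Complex.normSq c * q) : α = 0 ∧ 0 ≤ q := by
  have hα : α = 0 := by
    by_contra hα
    have hs : 0 < Complex.normSq α := Complex.normSq_pos.2 hα
    set t : ℝ := (|q| + 1)⁻¹
    have ht : 0 < t := by positivity
    have htq : t * q < 2 := by
      have : t * (|q| + 1) = 1 := inv_mul_cancel₀ (by positivity)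
      nlinarith [le_abs_self q]
    have hc := h (-t * conj α)
    have hre : (-t * conj α * α).re = -t * Complex.normSq α := by
      rw [mul_assoc, ← Complex.normSq_eq_conj_mul_self]; simp
    rw [hre, Complex.normSq_mul, Complex.normSq_neg, Complex.normSq_ofReal,
      Complex.normSq_conj] at hc
    nlinarith [mul_pos (mul_pos ht hs) (sub_pos.2 htq)]
  exact ⟨hα, by simpa [hα] using h 1⟩

section Krein

variable {J : H →L[ℂ] H}

theorem kreinAdjoint_inner_left {JK : K →L[ℂ] K} (hJK : JK ∘L JK = 1) (A : K →L[ℂ] H)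
    (y : H) (z : K) : ⟪JK (kreinAdjoint JK J A y), z⟫_ℂ = ⟪J y, A z⟫_ℂ := by
  have hJK' : ∀ v, JK (JK v) = v := fun v => congr($hJK v)
  rw [kreinAdjoint, comp_apply, comp_apply, hJK', adjoint_inner_left]

theorem kreinAdjoint_eq_mul (S : H →L[ℂ] H) : kreinAdjoint J J S = J * star S * J := rfl

theorem kreinAdjoint_sub (S T : H →L[ℂ] H) :
    kreinAdjoint J J (S - T) = kreinAdjoint J J S - kreinAdjoint J J T := by
  simp only [kreinAdjoint_eq_mul, star_sub, mul_sub, sub_mul]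

theorem kreinAdjoint_comp (hJ2 : J ∘L J = 1) (S T : H →L[ℂ] H) :
    kreinAdjoint J J (S ∘L T) = kreinAdjoint J J T ∘L kreinAdjoint J J S := by
  change J * star (S * T) * J = J * star T * J * (J * star S * J)
  have hJJ : J * J = 1 := hJ2
  simp only [star_mul, mul_assoc]
  rw [← mul_assoc J J, hJJ, one_mul]

theorem kreinAdjoint_kreinAdjoint (hJsa : IsSelfAdjoint J) (hJ2 : J ∘L J = 1)
    (S : H →L[ℂ] H) : kreinAdjoint J J (kreinAdjoint J J S) = S := by
  change J * star (J * star S * J) * J = S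
  have hJJ : J * J = 1 := hJ2
  simp only [star_mul, star_star, hJsa.star_eq, mul_assoc]
  rw [hJJ, mul_one, ← mul_assoc, hJJ, one_mul]

variable {W : H →L[ℂ] H}

theorem kreinAdjoint_errOp (hJsa : IsSelfAdjoint J) (hJ2 : J ∘L J = 1)
    (hW : kreinAdjoint J J W = W) (A : K →L[ℂ] H) (X : H →L[ℂ] K) :
    kreinAdjoint J J (errOp J A W X) = errOp J A W X := by
  rw [errOp, kreinAdjoint_comp hJ2, kreinAdjoint_comp hJ2, kreinAdjoint_kreinAdjoint hJsa hJ2, hW,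
    comp_assoc]

theorem inner_errOp_apply (hJ2 : J ∘L J = 1) (A : K →L[ℂ] H) (X : H →L[ℂ] K) (x : H) :
    ⟪J (errOp J A W X x), x⟫_ℂ = ⟪J (W (A (X x) - x)), A (X x) - x⟫_ℂ := by
  rw [errOp, comp_apply, kreinAdjoint_inner_left hJ2]
  simp

theorem inner_apply_swap_of_kreinAdjoint_eq_self (hJsa : IsSelfAdjoint J) (hJ2 : J ∘L J = 1)
    (hW : kreinAdjoint J J W = W) (u v : H) : ⟪J (W v), u⟫_ℂ = conj ⟪J (W u), v⟫_ℂ :=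
  calc ⟪J (W v), u⟫_ℂ = ⟪J (kreinAdjoint J J W v), u⟫_ℂ := by rw [hW]
    _ = ⟪J v, W u⟫_ℂ := kreinAdjoint_inner_left hJ2 W v u
    _ = ⟪v, J (W u)⟫_ℂ := hJsa.isSymmetric v (W u)
    _ = conj ⟪J (W u), v⟫_ℂ := (inner_conj_symm _ _).symm

theorem re_inner_apply_add_of_kreinAdjoint_eq_self (hJsa : IsSelfAdjoint J) (hJ2 : J ∘L J = 1)
    (hW : kreinAdjoint J J W = W) (u v : H) :
    (⟪J (W (u + v)), u + v⟫_ℂ).re =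
      (⟪J (W u), u⟫_ℂ).re + 2 * (⟪J (W u), v⟫_ℂ).re + (⟪J (W v), v⟫_ℂ).re := by
  simp only [map_add, inner_add_left, inner_add_right, Complex.add_re,
    inner_apply_swap_of_kreinAdjoint_eq_self hJsa hJ2 hW u v, Complex.conj_re]
  ring

theorem re_inner_errOp_sub_apply (hJsa : IsSelfAdjoint J) (hJ2 : J ∘L J = 1)
    (hW : kreinAdjoint J J W = W) (A : K →L[ℂ] H) (X X₀ : H →L[ℂ] K) (x : H) :
    (⟪J ((errOp J A W X - errOp J A W X₀) x), x⟫_ℂ).re =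
      2 * (⟪J (W (A (X₀ x) - x)), A (X x - X₀ x)⟫_ℂ).re +
        (⟪J (W (A (X x - X₀ x))), A (X x - X₀ x)⟫_ℂ).re := by
  have hsplit : A (X x) - x = (A (X₀ x) - x) + A (X x - X₀ x) := by rw [map_sub]; abel
  rw [sub_apply, map_sub, inner_sub_left, Complex.sub_re, inner_errOp_apply hJ2,
    inner_errOp_apply hJ2, hsplit, re_inner_apply_add_of_kreinAdjoint_eq_self hJsa hJ2 hW]
  ring

theorem kreinPositive_errOp_sub {JK : K →L[ℂ] K} (hJsa : IsSelfAdjoint J) (hJ2 : J ∘L J = 1)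
    (hJK : JK ∘L JK = 1) (hW : kreinAdjoint J J W = W) {A : K →L[ℂ] H}
    (hnonneg : ∀ z, 0 ≤ (⟪J (W (A z)), A z⟫_ℂ).re) {X₀ : H →L[ℂ] K}
    (hX₀ : ∀ x, kreinAdjoint JK J A (W (A (X₀ x) - x)) = 0) (X : H →L[ℂ] K) :
    KreinPositive J (errOp J A W X - errOp J A W X₀) := by
  refine ⟨by rw [kreinAdjoint_sub, kreinAdjoint_errOp hJsa hJ2 hW,
    kreinAdjoint_errOp hJsa hJ2 hW], fun x => ?_⟩
  rw [re_inner_errOp_sub_apply hJsa hJ2 hW, ← kreinAdjoint_inner_left hJK, hX₀, map_zero,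
    inner_zero_left, Complex.zero_re, mul_zero, zero_add]
  exact hnonneg _

section Minimizer

variable {A : K →L[ℂ] H} {X₀ : H →L[ℂ] K}

theorem inner_eq_zero_and_re_inner_nonneg_of_minimizer (hJsa : IsSelfAdjoint J)
    (hJ2 : J ∘L J = 1) (hW : kreinAdjoint J J W = W)
    (hX₀ : ∀ X, KreinPositive J (errOp J A W X - errOp J A W X₀)) {x : H} (hx : x ≠ 0) (k : K) :
    ⟪J (W (A (X₀ x) - x)), A k⟫_ℂ = 0 ∧ 0 ≤ (⟪J (W (A k)), A k⟫_ℂ).re := by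
  refine eq_zero_and_nonneg_of_forall_re_quadratic_nonneg fun c => ?_
  obtain ⟨f, hf⟩ := SeparatingDual.exists_eq_one (R := ℂ) hx
  have h := (hX₀ (X₀ + f.smulRight (c • k))).2 x
  have hD : (X₀ + f.smulRight (c • k)) x - X₀ x = c • k := by simp [hf]
  rwa [re_inner_errOp_sub_apply hJsa hJ2 hW, hD, map_smul, map_smul, map_smul, inner_smul_right,
    inner_smul_left, inner_smul_right, ← mul_assoc, ← Complex.normSq_eq_conj_mul_self,
    Complex.re_ofReal_mul] at h

theorem re_inner_nonneg_of_minimizer (hJsa : IsSelfAdjoint J) (hJ2 : J ∘L J = 1)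
    (hW : kreinAdjoint J J W = W) (hX₀ : ∀ X, KreinPositive J (errOp J A W X - errOp J A W X₀))
    (z : K) : 0 ≤ (⟪J (W (A z)), A z⟫_ℂ).re := by
  by_cases hAz : A z = 0
  · simp [hAz]
  · exact (inner_eq_zero_and_re_inner_nonneg_of_minimizer hJsa hJ2 hW hX₀ hAz z).2

theorem kreinAdjoint_apply_eq_zero_of_minimizer {JK : K →L[ℂ] K} (hJsa : IsSelfAdjoint J)
    (hJ2 : J ∘L J = 1) (hW : kreinAdjoint J J W = W)
    (hX₀ : ∀ X, KreinPositive J (errOp J A W X - errOp J A W X₀)) (x : H) :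
    kreinAdjoint JK J A (W (A (X₀ x) - x)) = 0 := by
  by_cases hx : x = 0
  · simp [hx]
  have h := (inner_eq_zero_and_re_inner_nonneg_of_minimizer hJsa hJ2 hW hX₀ hx
    (adjoint A (J (W (A (X₀ x) - x))))).1
  rw [← adjoint_inner_left, inner_self_eq_zero] at h
  rw [kreinAdjoint, comp_apply, comp_apply, h, map_zero]

end Minimizer

end Krein

theorem stmt5_general
    (JH : H →L[ℂ] H) (hJHsa : IsSelfAdjoint JH) (hJH2 : JH ∘L JH = 1)
    (JK : K →L[ℂ] K) (hJK2 : JK ∘L JK = 1)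
    (A : K →L[ℂ] H) (W : H →L[ℂ] H)
    (hW : JH ∘L (ContinuousLinearMap.adjoint W) ∘L JH = W) :
    (∃ X₀ : H →L[ℂ] K, ∀ X : H →L[ℂ] K,
        KreinPositive JH (errOp JH A W X - errOp JH A W X₀)) ↔
      ((∀ z : K, 0 ≤ (inner ℂ (JH (W (A z))) (A z) : ℂ).re) ∧
        (∀ x : H, ∃ (z : K) (h : H),
          kreinAdjoint JK JH A (W h) = 0 ∧ x = A z + h)) := by
  constructor
  · rintro ⟨X₀, hX₀⟩
    refine ⟨re_inner_nonneg_of_minimizer hJHsa hJH2 hW hX₀, fun x => ⟨X₀ x, x - A (X₀ x), ?_, ?_⟩⟩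
    · rw [← neg_sub, map_neg, map_neg, kreinAdjoint_apply_eq_zero_of_minimizer hJHsa hJH2 hW hX₀,
        neg_zero]
    · abel
  · rintro ⟨hnonneg, hdecomp⟩
    have hsup : A.range ⊔ (kreinAdjoint JK JH A ∘L W).ker = ⊤ := by
      refine Submodule.eq_top_iff'.2 fun x => ?_
      obtain ⟨z, h, hh, rfl⟩ := hdecomp x
      exact Submodule.add_mem_sup ⟨z, rfl⟩ hh
    obtain ⟨X₀, hX₀⟩ := exists_apply_sub_mem_of_range_sup_eq_top A (isClosed_ker _) hsup
    exact ⟨X₀, kreinPositive_errOp_sub hJHsa hJH2 hJK2 hW hnonneg hX₀⟩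

/-- there is a Krein-order minimizer `X₀` of `(AX−I)^# W (AX−I)` iff
`ran A` is `W`-nonnegative and `ran A + ker(A^# W) = H`. -/
theorem stmt5
    [TopologicalSpace.SeparableSpace H] [TopologicalSpace.SeparableSpace K]
    (JH : H →L[ℂ] H) (hJHsa : IsSelfAdjoint JH) (hJH2 : JH ∘L JH = 1)
    (JK : K →L[ℂ] K) (hJKsa : IsSelfAdjoint JK) (hJK2 : JK ∘L JK = 1)
    (A : K →L[ℂ] H) (W : H →L[ℂ] H)
    (hW : JH ∘L (ContinuousLinearMap.adjoint W) ∘L JH = W) :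
    (∃ X₀ : H →L[ℂ] K, ∀ X : H →L[ℂ] K,
        KreinPositive JH (errOp JH A W X - errOp JH A W X₀)) ↔
      ((∀ z : K, 0 ≤ (inner ℂ (JH (W (A z))) (A z) : ℂ).re) ∧
        (∀ x : H, ∃ (z : K) (h : H),
          kreinAdjoint JK JH A (W h) = 0 ∧ x = A z + h)) :=
  stmt5_general JH hJHsa hJH2 JK hJK2 A W hW
end
end

section
/- Let T, V ∈ L(H), let f₀ ∈ ran V, and let x₀ ∈ H satisfy Vx₀ = f₀. Then x₀ is a solution of the indefinite spline problem, i.e., [Tx₀,Tx₀] ≤ [Tx,Tx] for every x ∈ H with Vx = f₀, if and only if T(ker V) is a nonnegative subspace of H (i.e., [Tz,Tz] ≥ 0 for every z ∈ ker V) and [Tx₀, Tz] = 0 for every z ∈ ker V. -/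
/-!
For `z ∈ ker V` and `c ∈ ℂ`, symmetry of `J` gives
`[T(x₀ + c z), T(x₀ + c z)] = [Tx₀, Tx₀] + 2 Re (c [Tx₀, Tz]) + |c|² [Tz, Tz]`,
and the feasible set is `x₀ + ker V`. A function `c ↦ 2 Re (c β) + |c|² γ` on `ℂ` is nonnegative
iff `β = 0` and `γ ≥ 0`: otherwise it is negative at `c = -t β̄` for small `t > 0`.
-/

open ContinuousLinearMap

noncomputable section

variable {H : Type*} [NormedAddCommGroup H] [InnerProductSpace ℂ H] [CompleteSpace H]

open RCLike ComplexConjugate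

section

variable {𝕜 : Type*} [RCLike 𝕜]

theorem forall_nonneg_two_mul_re_add_norm_sq_mul_iff {β : 𝕜} {γ : ℝ} :
    (∀ c : 𝕜, 0 ≤ 2 * re (c * β) + ‖c‖ ^ 2 * γ) ↔ 0 ≤ γ ∧ β = 0 := by
  constructor
  · intro h
    have hβ : β = 0 := by
      by_contra hβ
      set t : ℝ := (|γ| + 1)⁻¹
      have ht : 0 < t := by positivity
      have htγ : t * γ < 2 := by
        have : t * (|γ| + 1) = 1 := inv_mul_cancel₀ (by positivity)
        nlinarith [le_abs_self γ]
      have hc := h (-(t : 𝕜) * conj β)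
      have hre : re (-(t : 𝕜) * conj β * β) = -(t * ‖β‖ ^ 2) := by
        rw [mul_assoc, RCLike.conj_mul, ← ofReal_pow, neg_mul, ← ofReal_mul, map_neg, ofReal_re]
      have hnorm : ‖-(t : 𝕜) * conj β‖ ^ 2 = t ^ 2 * ‖β‖ ^ 2 := by
        rw [norm_mul, norm_neg, norm_conj, norm_ofReal, abs_of_pos ht, mul_pow]
      rw [hre, hnorm] at hc
      have hβpos : 0 < ‖β‖ ^ 2 := by positivity
      nlinarith [mul_pos ht hβpos]
    refine ⟨?_, hβ⟩
    simpa [hβ] using h 1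
  · rintro ⟨hγ, rfl⟩ c
    simp only [mul_zero, map_zero, zero_add]
    positivity

variable {E F : Type*} [NormedAddCommGroup E] [InnerProductSpace 𝕜 E]

local notation "⟪" x ", " y "⟫" => @inner 𝕜 _ _ x y

theorem LinearMap.IsSymmetric.re_inner_map_add_smul {A : E →ₗ[𝕜] E} (hA : A.IsSymmetric)
    (u v : E) (c : 𝕜) :
    re ⟪A (u + c • v), u + c • v⟫ =
      re ⟪A u, u⟫ + 2 * re (c * ⟪A u, v⟫) + ‖c‖ ^ 2 * re ⟪A v, v⟫ := by
  have hvu : ⟪A v, u⟫ = conj ⟪A u, v⟫ := by rw [hA, inner_conj_symm]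
  simp only [map_add, map_smul, inner_add_left, inner_add_right, inner_smul_left,
    inner_smul_right, hvu]
  rw [mul_add, ← mul_assoc, RCLike.mul_conj, ← map_mul, conj_re, map_add, ← ofReal_pow,
    re_ofReal_mul]
  ring

variable [NormedAddCommGroup F] [InnerProductSpace 𝕜 F] {J : F →ₗ[𝕜] F}

theorem LinearMap.IsSymmetric.forall_re_inner_map_le_add_smul_iff (hJ : J.IsSymmetric)
    (u v : F) :
    (∀ c : 𝕜, re ⟪J u, u⟫ ≤ re ⟪J (u + c • v), u + c • v⟫) ↔
      0 ≤ re ⟪J v, v⟫ ∧ ⟪J u, v⟫ = 0 := by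
  simp only [hJ.re_inner_map_add_smul, add_assoc, le_add_iff_nonneg_right]
  exact forall_nonneg_two_mul_re_add_norm_sq_mul_iff

theorem LinearMap.IsSymmetric.forall_re_inner_comp_le_iff (hJ : J.IsSymmetric)
    (T : E →ₗ[𝕜] F) (K : Submodule 𝕜 E) (x₀ : E) :
    (∀ z ∈ K, re ⟪J (T x₀), T x₀⟫ ≤ re ⟪J (T (x₀ + z)), T (x₀ + z)⟫) ↔
      (∀ z ∈ K, 0 ≤ re ⟪J (T z), T z⟫) ∧ ∀ z ∈ K, ⟪J (T x₀), T z⟫ = 0 := by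
  constructor
  · intro h
    have hdir : ∀ z ∈ K, 0 ≤ re ⟪J (T z), T z⟫ ∧ ⟪J (T x₀), T z⟫ = 0 := fun z hz ↦
      (hJ.forall_re_inner_map_le_add_smul_iff _ _).mp fun c ↦ by
        simpa only [map_add, map_smul] using h (c • z) (K.smul_mem c hz)
    exact ⟨fun z hz ↦ (hdir z hz).1, fun z hz ↦ (hdir z hz).2⟩
  · rintro ⟨hpos, horth⟩ z hz
    simpa only [one_smul, map_add] using
      (hJ.forall_re_inner_map_le_add_smul_iff (T x₀) (T z)).mpr ⟨hpos z hz, horth z hz⟩ 1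

end

theorem LinearMap.forall_apply_eq_imp_iff_forall_mem_ker {R M N : Type*} [Semiring R]
    [AddCommGroup M] [AddCommGroup N] [Module R M] [Module R N] {V : M →ₗ[R] N}
    {x₀ : M} {y : N} (hx₀ : V x₀ = y) {P : M → Prop} :
    (∀ x, V x = y → P x) ↔ ∀ z ∈ LinearMap.ker V, P (x₀ + z) := by
  refine ⟨fun h z hz ↦ h _ ?_, fun h x hx ↦ ?_⟩
  · rw [map_add, LinearMap.mem_ker.mp hz, hx₀, add_zero]
  · simpa using h (x - x₀) (by simp [hx, hx₀])

theorem stmt9_general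
    (J : H →L[ℂ] H) (hJsa : IsSelfAdjoint J)
    (T V : H →L[ℂ] H) (f₀ : H)
    (x₀ : H) (hx₀ : V x₀ = f₀) :
    (∀ x : H, V x = f₀ →
        (inner ℂ (J (T x₀)) (T x₀) : ℂ).re ≤ (inner ℂ (J (T x)) (T x) : ℂ).re) ↔
      ((∀ z : H, V z = 0 → 0 ≤ (inner ℂ (J (T z)) (T z) : ℂ).re) ∧
        ∀ z : H, V z = 0 → (inner ℂ (J (T x₀)) (T z) : ℂ) = 0) := by
  exact (LinearMap.forall_apply_eq_imp_iff_forall_mem_ker (V := (V : H →ₗ[ℂ] H)) hx₀).trans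
    (hJsa.isSymmetric.forall_re_inner_comp_le_iff (T : H →ₗ[ℂ] H) _ x₀)

/-- `x₀` (with `V x₀ = f₀`) solves the indefinite spline problem
`min [Tx,Tx] s.t. Vx = f₀` iff `T(ker V)` is a nonnegative subspace and
`[Tx₀, Tz] = 0` for every `z ∈ ker V`. Here `[x,y] = ⟨Jx,y⟩`. -/
theorem stmt9
    [TopologicalSpace.SeparableSpace H]
    (J : H →L[ℂ] H) (hJsa : IsSelfAdjoint J) (hJ2 : J ∘L J = 1)
    (T V : H →L[ℂ] H) (f₀ : H) (hf₀ : f₀ ∈ Set.range V)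
    (x₀ : H) (hx₀ : V x₀ = f₀) :
    (∀ x : H, V x = f₀ →
        (inner ℂ (J (T x₀)) (T x₀) : ℂ).re ≤ (inner ℂ (J (T x)) (T x) : ℂ).re) ↔
      ((∀ z : H, V z = 0 → 0 ≤ (inner ℂ (J (T z)) (T z) : ℂ).re) ∧
        ∀ z : H, V z = 0 → (inner ℂ (J (T x₀)) (T z) : ℂ) = 0) :=
  stmt9_general J hJsa T V f₀ x₀ hx₀
end
end
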